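/- arXiv:0811.2261 — 4 statements merged into one kernel-verified Lean document; each statement's English description precedes it below -/
import Mathlib

section
/- The assignment M^C_S of Theorem (universal bivariant theory), with product [V →h X] • [W →k Y] := [V' →^{h∘k''} X], pushforward f_*[V →h X] := [V →^{f∘h} Y], and pullback g^*[V →h X] := [V' →^{h'} X'] via fiber product, satisfies the associativity axiom (B-1): (α • β) • γ = α • (β • γ). -/
open CategoryTheory CategoryTheory.Limits

universe v u

/-- The underlying object of the bivariant product of generators
`[A →a X] • [B →b Y]` in the universal bivariant theory, for `f : X ⟶ Y`. -/
noncomputable def prodObj {V : Type u} [Category.{v} V] [HasPullbacks V]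
    {X Y A B : V} (f : X ⟶ Y) (a : A ⟶ X) (b : B ⟶ Y) : V :=
  pullback a (pullback.fst f b)

/-- The structure morphism to `X` of the bivariant product of generators. -/
noncomputable def prodMor {V : Type u} [Category.{v} V] [HasPullbacks V]
    {X Y A B : V} (f : X ⟶ Y) (a : A ⟶ X) (b : B ⟶ Y) : prodObj f a b ⟶ X :=
  pullback.fst a (pullback.fst f b) ≫ a

/-!
The generator `[A →a X] • [B →b Y]` is, by pasting, the fibre product `A ×_Y B` taken along
`a ≫ f`. Hence both iterated products are fibre products of `a ≫ f : A → Y` with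
`B ×_Z D → B → Y`, the left one by the associativity of fibre products, and so they are
isomorphic over `A`, hence over `X`.
-/

namespace CategoryTheory.IsPullback

variable {C : Type*} [Category C]

theorem assoc {X₁ X₂ X₃ Y₁ Y₂ P R L : C} {f₁ : X₁ ⟶ Y₁} {f₂ : X₂ ⟶ Y₁} {f₃ : X₂ ⟶ Y₂}
    {f₄ : X₃ ⟶ Y₂} {π₁ : P ⟶ X₁} {π₂ : P ⟶ X₂} {ρ₁ : R ⟶ X₂} {ρ₂ : R ⟶ X₃}
    {u₁ : L ⟶ P} {u₂ : L ⟶ X₃}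
    (h₁₂ : IsPullback π₁ π₂ f₁ f₂) (h₂₃ : IsPullback ρ₁ ρ₂ f₃ f₄)
    (hL : IsPullback u₁ u₂ (π₂ ≫ f₃) f₄) :
    IsPullback (u₁ ≫ π₁) (h₂₃.lift (u₁ ≫ π₂) u₂ ((Category.assoc _ _ _).trans hL.w)) f₁
      (ρ₁ ≫ f₂) :=
  ((of_right ((h₂₃.lift_snd _ _ _).symm ▸ hL.flip) (h₂₃.lift_fst _ _ _) h₂₃.flip).paste_vert
    h₁₂.flip).flip

end CategoryTheory.IsPullback

section

variable {V : Type u} [Category.{v} V] [HasPullbacks V]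

theorem isPullback_prodObj {X Y A B : V} (f : X ⟶ Y) (a : A ⟶ X) (b : B ⟶ Y) :
    IsPullback (pullback.fst a (pullback.fst f b))
      (pullback.snd a (pullback.fst f b) ≫ pullback.snd f b) (a ≫ f) b :=
  ((IsPullback.of_hasPullback a _).flip.paste_horiz (IsPullback.of_hasPullback f b).flip).flip

theorem prodMor_comp {X Y A B : V} (f : X ⟶ Y) (a : A ⟶ X) (b : B ⟶ Y) :
    prodMor f a b ≫ f =
      (pullback.snd a (pullback.fst f b) ≫ pullback.snd f b : prodObj f a b ⟶ B) ≫ b :=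
  (Category.assoc _ _ _).trans (isPullback_prodObj f a b).w

end

theorem universal_product_assoc_general {V : Type u} [Category.{v} V] [HasPullbacks V]
    {X Y Z A B D : V} (f : X ⟶ Y) (g : Y ⟶ Z)
    (a : A ⟶ X) (b : B ⟶ Y) (c : D ⟶ Z) :
    ∃ φ : prodObj (f ≫ g) (prodMor f a b) c ≅ prodObj f a (prodMor g b c),
      φ.hom ≫ prodMor f a (prodMor g b c) = prodMor (f ≫ g) (prodMor f a b) c := by
  have hAB := isPullback_prodObj f a b
  have hBD := isPullback_prodObj g b c
  have hAB_D := isPullback_prodObj (f ≫ g) (prodMor f a b) c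
  rw [← Category.assoc (prodMor f a b), prodMor_comp, Category.assoc _ b] at hAB_D
  have hA_BD := isPullback_prodObj f a (prodMor g b c)
  exact ⟨(hAB.assoc hBD hAB_D).isoIsPullback _ _ hA_BD,
    (IsPullback.isoIsPullback_hom_fst_assoc _ _ _ _ a).trans (Category.assoc _ _ _)⟩

/-- Associativity (axiom (B-1)) of the bivariant product of the universal
bivariant theory `M^C_S`, on generators: the two iterated product generators are isomorphic
over `X`. -/
theorem universal_product_assoc {V : Type u} [Category.{v} V] [HasPullbacks V]
    (C S : MorphismProperty V) [S.IsStableUnderBaseChange] [S.IsStableUnderComposition]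
    [C.IsStableUnderBaseChange] [C.IsStableUnderComposition]
    {X Y Z T A B D : V} (f : X ⟶ Y) (g : Y ⟶ Z) (e : Z ⟶ T)
    (a : A ⟶ X) (b : B ⟶ Y) (c : D ⟶ Z)
    (haC : C a) (hbC : C b) (hcC : C c)
    (haS : S (a ≫ f)) (hbS : S (b ≫ g)) (hcS : S (c ≫ e)) :
    ∃ φ : prodObj (f ≫ g) (prodMor f a b) c ≅ prodObj f a (prodMor g b c),
      φ.hom ≫ prodMor f a (prodMor g b c) = prodMor (f ≫ g) (prodMor f a b) c :=
  universal_product_assoc_general f g a b c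
end

section
/- The universal bivariant theory M^C_S satisfies the projection formula (B-7): for an independent square (g' : X' → X, f' : X' → Y', f : X → Y, g : Y' → Y) with g confined, and α ∈ M^C_S(X → Y), β ∈ M^C_S(Y' → Z), one has g'_*(g^*α • β) = α • g_*β. -/
open CategoryTheory CategoryTheory.Limits

universe v u

/-!
Both product objects are iterated fibre products over `X`. Pasting the defining pullback
square of `pullback.snd a g'` onto that of the left-hand product identifies it with
`A ×_X (X' ×_{Y'} T)`, and pasting the square of `X' ×_{Y'} T` onto the given fibre square
identifies `X' ×_{Y'} T` with `X ×_Y T`; so the left-hand side is `A ×_X (X ×_Y T)`, which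
is the right-hand side.
-/

theorem exists_iso_prodObj_of_isPullback {V : Type u} [Category.{v} V] [HasPullbacks V]
    {X Y A B P Q : V} {f : X ⟶ Y} {a : A ⟶ X} {b : B ⟶ Y} {p : P ⟶ X} {q : P ⟶ B}
    {r : Q ⟶ A} {s : Q ⟶ P} (hP : IsPullback p q f b) (hQ : IsPullback r s a p) :
    ∃ φ : Q ≅ prodObj f a b, φ.hom ≫ prodMor f a b = r ≫ a := by
  have hQ' : IsPullback r (s ≫ hP.isoPullback.hom) a (pullback.fst f b) :=
    hQ.of_iso (Iso.refl _) (Iso.refl _) hP.isoPullback (Iso.refl _) (by simp) (by simp)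
      (by simp) (by simp)
  exact ⟨hQ'.isoPullback, hQ'.isoPullback_hom_fst_assoc a⟩

theorem universal_projection_formula_general {V : Type u} [Category.{v} V] [HasPullbacks V]
    {X' X Y' Y A T : V}
    {g' : X' ⟶ X} {f' : X' ⟶ Y'} {f : X ⟶ Y} {g : Y' ⟶ Y}
    (sq : IsPullback g' f' f g)
    (a : A ⟶ X) (b : T ⟶ Y') :
    ∃ φ : prodObj f' (pullback.snd a g') b ≅ prodObj f a (b ≫ g),
      φ.hom ≫ prodMor f a (b ≫ g)
        = prodMor f' (pullback.snd a g') b ≫ g' := by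
  obtain ⟨φ, hφ⟩ := exists_iso_prodObj_of_isPullback
    ((IsPullback.of_hasPullback f' b).paste_horiz sq)
    ((IsPullback.of_hasPullback (pullback.snd a g') (pullback.fst f' b)).paste_horiz
      (IsPullback.of_hasPullback a g'))
  refine ⟨φ, hφ.trans ?_⟩
  dsimp only [prodMor, prodObj]
  rw [Category.assoc, Category.assoc, pullback.condition]

/-- The projection formula (B-7) for the universal bivariant theory
`M^C_S`, on generators: for a fiber (independent) square with `g` confined,
`g'_*(g^*α • β) = α • g_*(β)`; i.e. the two product generators are isomorphic compatibly
with the structure morphisms to `X`. -/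
theorem universal_projection_formula {V : Type u} [Category.{v} V] [HasPullbacks V]
    (C S : MorphismProperty V) [S.IsStableUnderBaseChange] [S.IsStableUnderComposition]
    [C.IsStableUnderBaseChange] [C.IsStableUnderComposition]
    {X' X Y' Y Z A T : V}
    {g' : X' ⟶ X} {f' : X' ⟶ Y'} {f : X ⟶ Y} {g : Y' ⟶ Y}
    (sq : IsPullback g' f' f g) (hg : C g) (e : Y ⟶ Z)
    (a : A ⟶ X) (b : T ⟶ Y')
    (haC : C a) (hbC : C b) (haS : S (a ≫ f)) (hbS : S (b ≫ g ≫ e)) :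
    ∃ φ : prodObj f' (pullback.snd a g') b ≅ prodObj f a (b ≫ g),
      φ.hom ≫ prodMor f a (b ≫ g)
        = prodMor f' (pullback.snd a g') b ≫ g' :=
  universal_projection_formula_general sq a b
end

section
/- Uniqueness in the universal property: if γ : M^C_S → B is a Grothendieck transformation satisfying the normalization γ([X →^{id_X} X]) = θ_B(f) for every f : X → Y in S, then γ is determined on all generators by γ([V →^{h} X]) = h_*(θ_B(f∘h)). Consequently any two such Grothendieck transformations coincide. -/
open CategoryTheory CategoryTheory.Limits

universe w v u

/-- A Fulton--MacPherson bivariant theory on a category `V`, with a class `confined` of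
confined morphisms and a class `indep` of independent squares.  `indep g' f' f g` means that
the square with top `g' : X' ⟶ X`, left `f' : X' ⟶ Y'`, right `f : X ⟶ Y`, bottom
`g : Y' ⟶ Y` is independent. -/
structure BivariantTheory (V : Type u) [Category.{v} V]
    (confined : MorphismProperty V)
    (indep : ∀ {X' X Y' Y : V}, (X' ⟶ X) → (X' ⟶ Y') → (X ⟶ Y) → (Y' ⟶ Y) → Prop) where
  B : ∀ {X Y : V}, (X ⟶ Y) → Type w
  ab : ∀ {X Y : V} (f : X ⟶ Y), AddCommGroup (B f)
  /-- bivariant product -/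
  prod : ∀ {X Y Z : V} {f : X ⟶ Y} {g : Y ⟶ Z}, B f → B g → B (f ≫ g)
  /-- pushforward along a confined morphism -/
  pushf : ∀ {X Y Z : V} (f : X ⟶ Y) (g : Y ⟶ Z), confined f → B (f ≫ g) → B g
  /-- pullback along an independent square -/
  pullb : ∀ {X' X Y' Y : V} {g' : X' ⟶ X} {f' : X' ⟶ Y'} {f : X ⟶ Y} {g : Y' ⟶ Y},
      indep g' f' f g → B f → B f'
  /-- units -/
  one : ∀ X : V, B (𝟙 X)
  /-- (B-1) associativity of the product -/
  assoc : ∀ {X Y Z W : V} {f : X ⟶ Y} {g : Y ⟶ Z} {h : Z ⟶ W}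
      (α : B f) (β : B g) (γ : B h),
      cast (show B ((f ≫ g) ≫ h) = B (f ≫ g ≫ h) by rw [Category.assoc])
        (prod (prod α β) γ) = prod α (prod β γ)
  /-- (B-2) functoriality of pushforward -/
  push_comp : ∀ {X Y Z W : V} (f : X ⟶ Y) (g : Y ⟶ Z) (h : Z ⟶ W)
      (hf : confined f) (hg : confined g) (hfg : confined (f ≫ g)) (α : B ((f ≫ g) ≫ h)),
      pushf (f ≫ g) h hfg α
        = pushf g h hg (pushf f (g ≫ h) hf
            (cast (show B ((f ≫ g) ≫ h) = B (f ≫ g ≫ h) by rw [Category.assoc]) α))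
  /-- (B-3) functoriality of pullback -/
  pull_comp : ∀ {X'' X' X Y'' Y' Y : V}
      {h' : X'' ⟶ X'} {g' : X' ⟶ X} {f'' : X'' ⟶ Y''} {f' : X' ⟶ Y'} {f : X ⟶ Y}
      {h : Y'' ⟶ Y'} {g : Y' ⟶ Y}
      (sq1 : indep g' f' f g) (sq2 : indep h' f'' f' h)
      (sq12 : indep (h' ≫ g') f'' f (h ≫ g)) (α : B f),
      pullb sq12 α = pullb sq2 (pullb sq1 α)
  /-- (B-4) product and pushforward commute -/
  push_prod : ∀ {X Y Z W : V} (f : X ⟶ Y) (g : Y ⟶ Z) (h : Z ⟶ W)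
      (hf : confined f) (α : B (f ≫ g)) (β : B h),
      pushf f (g ≫ h) hf
          (cast (show B ((f ≫ g) ≫ h) = B (f ≫ g ≫ h) by rw [Category.assoc]) (prod α β))
        = prod (pushf f g hf α) β
  /-- (B-5) product and pullback commute -/
  pull_prod : ∀ {X' X Y' Y Z' Z : V}
      {gX : X' ⟶ X} {gY : Y' ⟶ Y} {g : Z' ⟶ Z}
      {f : X ⟶ Y} {f' : X' ⟶ Y'} {h : Y ⟶ Z} {h' : Y' ⟶ Z'}
      (sqY : indep gY h' h g) (sqX : indep gX f' f gY)
      (sqXZ : indep gX (f' ≫ h') (f ≫ h) g) (α : B f) (β : B h),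
      pullb sqXZ (prod α β) = prod (pullb sqX α) (pullb sqY β)
  /-- (B-6) pushforward and pullback commute -/
  push_pull : ∀ {X' X Y' Y Z' Z : V}
      {hX : X' ⟶ X} {hY : Y' ⟶ Y} {h : Z' ⟶ Z}
      {f : X ⟶ Y} {f' : X' ⟶ Y'} {g : Y ⟶ Z} {g' : Y' ⟶ Z'}
      (sqY : indep hY g' g h) (sqX : indep hX (f' ≫ g') (f ≫ g) h)
      (hf : confined f) (hf' : confined f') (α : B (f ≫ g)),
      pushf f' g' hf' (pullb sqX α) = pullb sqY (pushf f g hf α)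
  /-- (B-7) projection formula -/
  proj : ∀ {X' X Y' Y Z : V}
      {g' : X' ⟶ X} {f' : X' ⟶ Y'} {f : X ⟶ Y} {g : Y' ⟶ Y}
      (sq : indep g' f' f g) (w : g' ≫ f = f' ≫ g)
      (hg : confined g) (hg' : confined g') (e : Y ⟶ Z)
      (α : B f) (β : B (g ≫ e)),
      pushf g' (f ≫ e) hg'
          (cast (show B (f' ≫ g ≫ e) = B (g' ≫ f ≫ e) by
              rw [← Category.assoc, ← w, Category.assoc])
            (prod (pullb sq α) β))
        = prod α (pushf g e hg β)
  /-- right unit -/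
  prod_one : ∀ {W X : V} (f : W ⟶ X) (α : B f),
      cast (show B (f ≫ 𝟙 X) = B f by rw [Category.comp_id]) (prod α (one X)) = α
  /-- left unit -/
  one_prod : ∀ {X Y : V} (f : X ⟶ Y) (β : B f),
      cast (show B (𝟙 X ≫ f) = B f by rw [Category.id_comp]) (prod (one X) β) = β
  /-- units are stable under pullback -/
  pull_one : ∀ {X' X : V} (g : X' ⟶ X) (sq : indep g (𝟙 X') (𝟙 X) g),
      pullb sq (one X) = one X'

attribute [instance] BivariantTheory.ab

namespace BivariantTheory

variable {V : Type u} [Category.{v} V] {confined : MorphismProperty V}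
  {indep : ∀ {X' X Y' Y : V}, (X' ⟶ X) → (X' ⟶ Y') → (X ⟶ Y) → (Y' ⟶ Y) → Prop}

variable (𝔹 : BivariantTheory.{w} V confined indep)

/-- transport along an equality of morphisms -/
def tr {X Y : V} {f g : X ⟶ Y} (e : f = g) : 𝔹.B f → 𝔹.B g :=
  fun α => cast (by rw [e]) α

/-- The covariant theory `B_*(X) := B(X → pt)`. -/
def Bstar [HasTerminal V] (X : V) : Type w := 𝔹.B (terminal.from X)

/-- The contravariant theory `B^*(X) := B(X →^{id} X)`. -/
def Bup (X : V) : Type w := 𝔹.B (𝟙 X)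

noncomputable instance BstarAddCommGroup [HasTerminal V] (X : V) : AddCommGroup (𝔹.Bstar X) := 𝔹.ab _

instance BupAddCommGroup (X : V) : AddCommGroup (𝔹.Bup X) := 𝔹.ab _

/-- Pushforward on `B_*` along a confined morphism. -/
noncomputable def starPush [HasTerminal V] {X Y : V} (f : X ⟶ Y) (hf : confined f) :
    𝔹.Bstar X → 𝔹.Bstar Y :=
  fun α => 𝔹.pushf f (terminal.from Y) hf (𝔹.tr (terminal.comp_from f).symm α)

end BivariantTheory

/-- A canonical orientation on a class `S` of specialized morphisms. -/
structure CanonicalOrientation {V : Type u} [Category.{v} V] {confined : MorphismProperty V}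
    {indep : ∀ {X' X Y' Y : V}, (X' ⟶ X) → (X' ⟶ Y') → (X ⟶ Y) → (Y' ⟶ Y) → Prop}
    (S : MorphismProperty V) (𝔹 : BivariantTheory.{w} V confined indep) where
  θ : ∀ {X Y : V} (f : X ⟶ Y), S f → 𝔹.B f
  θ_comp : ∀ {X Y Z : V} (f : X ⟶ Y) (g : Y ⟶ Z) (hf : S f) (hg : S g) (hfg : S (f ≫ g)),
      θ (f ≫ g) hfg = 𝔹.prod (θ f hf) (θ g hg)
  θ_id : ∀ (X : V) (h : S (𝟙 X)), θ (𝟙 X) h = 𝔹.one X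

namespace CanonicalOrientation

variable {V : Type u} [Category.{v} V] {confined : MorphismProperty V}
  {indep : ∀ {X' X Y' Y : V}, (X' ⟶ X) → (X' ⟶ Y') → (X ⟶ Y) → (Y' ⟶ Y) → Prop}
  {S : MorphismProperty V} {𝔹 : BivariantTheory.{w} V confined indep}

/-- The Gysin pullback `f^!(α) := θ(f) • α` on `B_*`. -/
noncomputable def gysinPull [HasTerminal V] (θ : CanonicalOrientation S 𝔹) {X Y : V} (f : X ⟶ Y)
    (hf : S f) : 𝔹.Bstar Y → 𝔹.Bstar X :=
  fun α => 𝔹.tr (terminal.comp_from f) (𝔹.prod (θ.θ f hf) α)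

/-- The Gysin pushforward `f_!(α) := f_*(α • θ(f))` on `B^*`. -/
def gysinPush (θ : CanonicalOrientation S 𝔹) {X Y : V} (f : X ⟶ Y)
    (hf : S f) (hc : confined f) : 𝔹.Bup X → 𝔹.Bup Y :=
  fun α => 𝔹.pushf f (𝟙 Y) hc (𝔹.tr (by simp) (𝔹.prod α (θ.θ f hf)))

end CanonicalOrientation

/-- A nice canonical orientation: the orientation is stable under pullback along
independent squares. -/
structure NiceCanonicalOrientation {V : Type u} [Category.{v} V] {confined : MorphismProperty V}
    {indep : ∀ {X' X Y' Y : V}, (X' ⟶ X) → (X' ⟶ Y') → (X ⟶ Y) → (Y' ⟶ Y) → Prop}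
    (S : MorphismProperty V) (𝔹 : BivariantTheory.{w} V confined indep)
    extends CanonicalOrientation S 𝔹 where
  θ_pull : ∀ {X' X Y' Y : V} {g' : X' ⟶ X} {f' : X' ⟶ Y'} {f : X ⟶ Y} {g : Y' ⟶ Y}
      (sq : indep g' f' f g) (hf : S f) (hf' : S f'),
      θ f' hf' = 𝔹.pullb sq (θ f hf)

/-- A Grothendieck transformation between two bivariant theories. -/
structure GrothendieckTransformation {V : Type u} [Category.{v} V]
    {confined : MorphismProperty V}
    {indep : ∀ {X' X Y' Y : V}, (X' ⟶ X) → (X' ⟶ Y') → (X ⟶ Y) → (Y' ⟶ Y) → Prop}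
    (𝕄 𝔹 : BivariantTheory.{w} V confined indep) where
  map : ∀ {X Y : V} (f : X ⟶ Y), 𝕄.B f → 𝔹.B f
  map_add : ∀ {X Y : V} (f : X ⟶ Y) (α β : 𝕄.B f), map f (α + β) = map f α + map f β
  map_prod : ∀ {X Y Z : V} (f : X ⟶ Y) (g : Y ⟶ Z) (α : 𝕄.B f) (β : 𝕄.B g),
      map (f ≫ g) (𝕄.prod α β) = 𝔹.prod (map f α) (map g β)
  map_push : ∀ {X Y Z : V} (f : X ⟶ Y) (g : Y ⟶ Z) (hf : confined f) (α : 𝕄.B (f ≫ g)),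
      map g (𝕄.pushf f g hf α) = 𝔹.pushf f g hf (map (f ≫ g) α)
  map_pull : ∀ {X' X Y' Y : V} {g' : X' ⟶ X} {f' : X' ⟶ Y'} {f : X ⟶ Y} {g : Y' ⟶ Y}
      (sq : indep g' f' f g) (α : 𝕄.B f),
      map f' (𝕄.pullb sq α) = 𝔹.pullb sq (map f α)

/-- An abstract presentation of the universal bivariant theory `M^C_S`: it is generated by
classes `[W →h X]` of confined morphisms `h` with `h ≫ f` specialized, every generator is the
pushforward of the class of an identity, and the generators span. -/
structure UnivGen {V : Type u} [Category.{v} V] {confined : MorphismProperty V}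
    {indep : ∀ {X' X Y' Y : V}, (X' ⟶ X) → (X' ⟶ Y') → (X ⟶ Y) → (Y' ⟶ Y) → Prop}
    (S : MorphismProperty V) (𝕄 : BivariantTheory.{w} V confined indep) where
  gen : ∀ {W X Y : V} (h : W ⟶ X) (f : X ⟶ Y), confined h → S (h ≫ f) → 𝕄.B f
  gen_push : ∀ {W X Y : V} (h : W ⟶ X) (f : X ⟶ Y) (hC : confined h) (hS : S (h ≫ f))
      (hC1 : confined (𝟙 W)) (hS1 : S (𝟙 W ≫ h ≫ f)),
      gen h f hC hS = 𝕄.pushf h f hC (gen (𝟙 W) (h ≫ f) hC1 hS1)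
  span : ∀ {X Y : V} (f : X ⟶ Y) (α : 𝕄.B f),
      α ∈ AddSubgroup.closure
        {x : 𝕄.B f | ∃ (W : V) (h : W ⟶ X) (hC : confined h) (hS : S (h ≫ f)),
          x = gen h f hC hS}

variable {V : Type u} [Category.{v} V] {confined : MorphismProperty V}
  {indep : ∀ {X' X Y' Y : V}, (X' ⟶ X) → (X' ⟶ Y') → (X ⟶ Y) → (Y' ⟶ Y) → Prop}
  {S : MorphismProperty V}

theorem UnivGen.gen_eq_pushf_gen_id {𝕄 : BivariantTheory.{w} V confined indep}
    (U : UnivGen S 𝕄) {W X Y : V} (h : W ⟶ X) (f : X ⟶ Y) (hC : confined h) (hS : S (h ≫ f))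
    (hW : confined (𝟙 W)) :
    U.gen h f hC hS = 𝕄.pushf h f hC (U.gen (𝟙 W) (h ≫ f) hW (by rwa [Category.id_comp])) :=
  U.gen_push h f hC hS hW _

namespace GrothendieckTransformation

variable {𝕄 𝔹 : BivariantTheory.{w} V confined indep}

def mapAddHom (γ : GrothendieckTransformation 𝕄 𝔹) {X Y : V} (f : X ⟶ Y) : 𝕄.B f →+ 𝔹.B f :=
  AddMonoidHom.mk' (γ.map f) (γ.map_add f)

theorem map_gen_eq_pushf (γ : GrothendieckTransformation 𝕄 𝔹) (U : UnivGen S 𝕄)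
    (θ : ∀ {X Y : V} (f : X ⟶ Y), S f → 𝔹.B f)
    (hnorm : ∀ {X Y : V} (f : X ⟶ Y) (hf : S f) (hC : confined (𝟙 X)) (hS : S (𝟙 X ≫ f)),
        γ.map f (U.gen (𝟙 X) f hC hS) = θ f hf)
    {W X Y : V} (h : W ⟶ X) (f : X ⟶ Y) (hC : confined h) (hS : S (h ≫ f))
    (hW : confined (𝟙 W)) :
    γ.map f (U.gen h f hC hS) = 𝔹.pushf h f hC (θ (h ≫ f) hS) := by
  rw [U.gen_eq_pushf_gen_id h f hC hS hW, γ.map_push, hnorm]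

theorem map_eq_of_map_gen_eq (γ γ' : GrothendieckTransformation 𝕄 𝔹) (U : UnivGen S 𝕄)
    (hgen : ∀ {W X Y : V} (h : W ⟶ X) (f : X ⟶ Y) (hC : confined h) (hS : S (h ≫ f)),
        γ.map f (U.gen h f hC hS) = γ'.map f (U.gen h f hC hS))
    {X Y : V} (f : X ⟶ Y) (α : 𝕄.B f) :
    γ.map f α = γ'.map f α :=
  AddMonoidHom.eqOn_closure (f := γ.mapAddHom f) (g := γ'.mapAddHom f)
    (by rintro _ ⟨W, h, hC, hS, rfl⟩; exact hgen h f hC hS) (U.span f α)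

end GrothendieckTransformation

theorem universal_uniqueness_general
    (𝕄 𝔹 : BivariantTheory.{w} V confined indep) (U : UnivGen S 𝕄)
    (θ : NiceCanonicalOrientation S 𝔹)
    (γ γ' : GrothendieckTransformation 𝕄 𝔹)
    (hnorm : ∀ {X Y : V} (f : X ⟶ Y) (hf : S f) (hC : confined (𝟙 X)) (hS : S (𝟙 X ≫ f)),
        γ.map f (U.gen (𝟙 X) f hC hS) = θ.θ f hf)
    (hnorm' : ∀ {X Y : V} (f : X ⟶ Y) (hf : S f) (hC : confined (𝟙 X)) (hS : S (𝟙 X ≫ f)),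
        γ'.map f (U.gen (𝟙 X) f hC hS) = θ.θ f hf)
    (hCid : ∀ X : V, confined (𝟙 X)) :
    (∀ {W X Y : V} (h : W ⟶ X) (f : X ⟶ Y) (hC : confined h) (hS : S (h ≫ f)),
        γ.map f (U.gen h f hC hS) = 𝔹.pushf h f hC (θ.θ (h ≫ f) hS)) ∧
    (∀ {X Y : V} (f : X ⟶ Y) (α : 𝕄.B f), γ.map f α = γ'.map f α) := by
  refine ⟨fun h f hC hS => γ.map_gen_eq_pushf U θ.θ hnorm h f hC hS (hCid _),
    γ.map_eq_of_map_gen_eq γ' U fun h f hC hS => ?_⟩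
  rw [γ.map_gen_eq_pushf U θ.θ hnorm h f hC hS (hCid _),
    γ'.map_gen_eq_pushf U θ.θ hnorm' h f hC hS (hCid _)]

/-- Uniqueness in the universal property of `M^C_S`: a Grothendieck
transformation `γ : M^C_S → B` with the normalization `γ([X →^{id} X]) = θ_B(f)` for every
`f ∈ S` is determined on generators by `γ([V →h X]) = h_*(θ_B(f ∘ h))`; consequently any two
such Grothendieck transformations coincide. -/
theorem universal_uniqueness
    (𝕄 𝔹 : BivariantTheory.{w} V confined indep) (U : UnivGen S 𝕄)
    (θ : NiceCanonicalOrientation S 𝔹)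
    (γ γ' : GrothendieckTransformation 𝕄 𝔹)
    (hnorm : ∀ {X Y : V} (f : X ⟶ Y) (hf : S f) (hC : confined (𝟙 X)) (hS : S (𝟙 X ≫ f)),
        γ.map f (U.gen (𝟙 X) f hC hS) = θ.θ f hf)
    (hnorm' : ∀ {X Y : V} (f : X ⟶ Y) (hf : S f) (hC : confined (𝟙 X)) (hS : S (𝟙 X ≫ f)),
        γ'.map f (U.gen (𝟙 X) f hC hS) = θ.θ f hf)
    (hCid : ∀ X : V, confined (𝟙 X)) (hSid : ∀ {X Y : V} (f : X ⟶ Y), S f → S (𝟙 X ≫ f)) :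
    (∀ {W X Y : V} (h : W ⟶ X) (f : X ⟶ Y) (hC : confined h) (hS : S (h ≫ f)),
        γ.map f (U.gen h f hC hS) = 𝔹.pushf h f hC (θ.θ (h ≫ f) hS)) ∧
    (∀ {X Y : V} (f : X ⟶ Y) (α : 𝕄.B f), γ.map f α = γ'.map f α) :=
  universal_uniqueness_general 𝕄 𝔹 U θ γ γ' hnorm hnorm' hCid
end

section
/- Universal property of the oriented bivariant theory (uniqueness): any oriented Grothendieck transformation γ : OM^C_S → OB satisfying γ([X →^{id_X} X]) = θ_OB(f) for f ∈ S necessarily satisfies γ([V →h X; L_1,…,L_r]) = h_*(φ(L_1) ∘ ⋯ ∘ φ(L_r)(θ_OB(f∘h))) on all generators, hence is unique. -/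
open CategoryTheory CategoryTheory.Limits

universe w u₂ v u

/-- An oriented bivariant theory: a bivariant theory together with, for every fiber-object
`l` over `X` (of a fibered category modelled by `Lfib`, with isomorphism relation `Liso` and
pullback `Lpull`), an operator `φ(l)` on each `B(X →f Y)` satisfying (O-1)–(O-5). -/
structure OrientedBivariantTheory (V : Type u) [Category.{v} V]
    (confined : MorphismProperty V)
    (indep : ∀ {X' X Y' Y : V}, (X' ⟶ X) → (X' ⟶ Y') → (X ⟶ Y) → (Y' ⟶ Y) → Prop)
    (Lfib : V → Type u₂) (Liso : ∀ {X : V}, Lfib X → Lfib X → Prop)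
    (Lpull : ∀ {X Y : V}, (X ⟶ Y) → Lfib Y → Lfib X)
    extends BivariantTheory.{w} V confined indep where
  phi : ∀ {X Y : V} (f : X ⟶ Y), Lfib X → B f → B f
  /-- (O-1) identity -/
  phi_iso : ∀ {X Y : V} (f : X ⟶ Y) (l l' : Lfib X), Liso l l' → phi f l = phi f l'
  /-- (O-2) commutativity -/
  phi_comm : ∀ {X Y : V} (f : X ⟶ Y) (l l' : Lfib X) (α : B f),
      phi f l (phi f l' α) = phi f l' (phi f l α)
  /-- (O-3) compatibility with product, first formula -/
  phi_prod_left : ∀ {X Y Z : V} (f : X ⟶ Y) (g : Y ⟶ Z) (l : Lfib X) (α : B f) (β : B g),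
      phi (f ≫ g) l (prod α β) = prod (phi f l α) β
  /-- (O-3) compatibility with product, second formula -/
  phi_prod_right : ∀ {X Y Z : V} (f : X ⟶ Y) (g : Y ⟶ Z) (m : Lfib Y) (α : B f) (β : B g),
      phi (f ≫ g) (Lpull f m) (prod α β) = prod α (phi g m β)
  /-- (O-4) compatibility with pushforward -/
  phi_push : ∀ {X Y Z : V} (f : X ⟶ Y) (g : Y ⟶ Z) (hf : confined f) (m : Lfib Y)
      (α : B (f ≫ g)),
      pushf f g hf (phi (f ≫ g) (Lpull f m) α) = phi g m (pushf f g hf α)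
  /-- (O-5) compatibility with pullback -/
  phi_pull : ∀ {X' X Y' Y : V} {g' : X' ⟶ X} {f' : X' ⟶ Y'} {f : X ⟶ Y} {g : Y' ⟶ Y}
      (sq : indep g' f' f g) (l : Lfib X) (α : B f),
      pullb sq (phi f l α) = phi f' (Lpull g' l) (pullb sq α)

/-- An abstract presentation of the universal oriented bivariant theory `OM^C_S`:
it is generated by cobordism cycles `[W →h X; L₁,…,L_r]`, each generator is the pushforward
of the corresponding cycle over the identity, appending a pulled-back fiber-object is the
orientation operator, and the generators span. -/
structure OrientedUnivGen {V : Type u} [Category.{v} V] {confined : MorphismProperty V}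
    {indep : ∀ {X' X Y' Y : V}, (X' ⟶ X) → (X' ⟶ Y') → (X ⟶ Y) → (Y' ⟶ Y) → Prop}
    {Lfib : V → Type u₂} {Liso : ∀ {X : V}, Lfib X → Lfib X → Prop}
    {Lpull : ∀ {X Y : V}, (X ⟶ Y) → Lfib Y → Lfib X}
    (S : MorphismProperty V)
    (𝕄 : OrientedBivariantTheory.{w} V confined indep Lfib @Liso @Lpull) where
  gen : ∀ {W X Y : V} (h : W ⟶ X) (f : X ⟶ Y),
      List (Lfib W) → confined h → S (h ≫ f) → 𝕄.B f
  gen_push : ∀ {W X Y : V} (h : W ⟶ X) (f : X ⟶ Y) (Ls : List (Lfib W))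
      (hC : confined h) (hS : S (h ≫ f)) (hC1 : confined (𝟙 W)) (hS1 : S (𝟙 W ≫ h ≫ f)),
      gen h f Ls hC hS = 𝕄.pushf h f hC (gen (𝟙 W) (h ≫ f) Ls hC1 hS1)
  gen_phi : ∀ {W X Y : V} (h : W ⟶ X) (f : X ⟶ Y) (Ls : List (Lfib W)) (l : Lfib X)
      (hC : confined h) (hS : S (h ≫ f)),
      gen h f (Ls ++ [Lpull h l]) hC hS = 𝕄.phi f l (gen h f Ls hC hS)
  span : ∀ {X Y : V} (f : X ⟶ Y) (α : 𝕄.B f),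
      α ∈ AddSubgroup.closure
        {x : 𝕄.B f | ∃ (W : V) (h : W ⟶ X) (Ls : List (Lfib W)) (hC : confined h)
          (hS : S (h ≫ f)), x = gen h f Ls hC hS}

/-- An oriented Grothendieck transformation: a Grothendieck transformation which
intertwines the orientation operators. -/
structure OrientedGrothendieckTransformation {V : Type u} [Category.{v} V]
    {confined : MorphismProperty V}
    {indep : ∀ {X' X Y' Y : V}, (X' ⟶ X) → (X' ⟶ Y') → (X ⟶ Y) → (Y' ⟶ Y) → Prop}
    {Lfib : V → Type u₂} {Liso : ∀ {X : V}, Lfib X → Lfib X → Prop}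
    {Lpull : ∀ {X Y : V}, (X ⟶ Y) → Lfib Y → Lfib X}
    (𝕄 𝔹 : OrientedBivariantTheory.{w} V confined indep Lfib @Liso @Lpull)
    extends GrothendieckTransformation 𝕄.toBivariantTheory 𝔹.toBivariantTheory where
  map_phi : ∀ {X Y : V} (f : X ⟶ Y) (l : Lfib X) (α : 𝕄.B f),
      map f (𝕄.phi f l α) = 𝔹.phi f l (map f α)

variable {V : Type u} [Category.{v} V] {confined : MorphismProperty V}
  {indep : ∀ {X' X Y' Y : V}, (X' ⟶ X) → (X' ⟶ Y') → (X ⟶ Y) → (Y' ⟶ Y) → Prop}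
  {S : MorphismProperty V}
  {Lfib : V → Type u₂} {Liso : ∀ {X : V}, Lfib X → Lfib X → Prop}
  {Lpull : ∀ {X Y : V}, (X ⟶ Y) → Lfib Y → Lfib X}

/-
A generator `[W →h X; L₁,…,L_r]` is `h_*` of `φ(L_r) ⋯ φ(L₁) [W →id W]` (pulling back along
`𝟙 W` does not change the `Lᵢ`), so an oriented Grothendieck transformation is determined on
generators by its values on the cycles `[W →id W]`; since the generators span and the maps are
additive, it is determined everywhere.
-/

namespace OrientedBivariantTheory

theorem foldr_phi_phi (𝔹 : OrientedBivariantTheory.{w} V confined indep Lfib @Liso @Lpull)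
    {X Y : V} (g : X ⟶ Y) (l : Lfib X) (Ls : List (Lfib X)) (β : 𝔹.B g) :
    Ls.foldr (fun m α => 𝔹.phi g m α) (𝔹.phi g l β)
      = 𝔹.phi g l (Ls.foldr (fun m α => 𝔹.phi g m α) β) := by
  induction Ls with
  | nil => rfl
  | cons m Ls ih => simp only [List.foldr_cons, ih, 𝔹.phi_comm]

end OrientedBivariantTheory

namespace GrothendieckTransformation

variable {𝕄 𝔹 : BivariantTheory.{w} V confined indep}

def mapHom (γ : GrothendieckTransformation 𝕄 𝔹) {X Y : V} (f : X ⟶ Y) : 𝕄.B f →+ 𝔹.B f :=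
  AddMonoidHom.mk' (γ.map f) (γ.map_add f)

end GrothendieckTransformation

namespace OrientedGrothendieckTransformation

variable {𝕄 𝔹 : OrientedBivariantTheory.{w} V confined indep Lfib @Liso @Lpull}
  (U : OrientedUnivGen S 𝕄) (γ : OrientedGrothendieckTransformation 𝕄 𝔹)

theorem map_gen_id (hLpull_id : ∀ {X : V} (l : Lfib X), Lpull (𝟙 X) l = l)
    {W Y : V} (g : W ⟶ Y) (hC : confined (𝟙 W)) (hS : S (𝟙 W ≫ g)) {θ : 𝔹.B g}
    (hθ : γ.map g (U.gen (𝟙 W) g [] hC hS) = θ) (Ls : List (Lfib W)) :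
    γ.map g (U.gen (𝟙 W) g Ls hC hS) = Ls.foldr (fun l α => 𝔹.phi g l α) θ := by
  induction Ls using List.reverseRecOn with
  | nil => exact hθ
  | append_singleton Ls l ih =>
    calc γ.map g (U.gen (𝟙 W) g (Ls ++ [l]) hC hS)
        = γ.map g (U.gen (𝟙 W) g (Ls ++ [Lpull (𝟙 W) l]) hC hS) := by rw [hLpull_id]
      _ = 𝔹.phi g l (γ.map g (U.gen (𝟙 W) g Ls hC hS)) := by rw [U.gen_phi, γ.map_phi]
      _ = (Ls ++ [l]).foldr (fun l α => 𝔹.phi g l α) θ := by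
        rw [ih, List.foldr_append, List.foldr_cons, List.foldr_nil, 𝔹.foldr_phi_phi]

theorem map_gen (hLpull_id : ∀ {X : V} (l : Lfib X), Lpull (𝟙 X) l = l)
    {W X Y : V} (h : W ⟶ X) (f : X ⟶ Y) (Ls : List (Lfib W)) (hC : confined h)
    (hS : S (h ≫ f)) (hC1 : confined (𝟙 W)) (hS1 : S (𝟙 W ≫ h ≫ f)) {θ : 𝔹.B (h ≫ f)}
    (hθ : γ.map (h ≫ f) (U.gen (𝟙 W) (h ≫ f) [] hC1 hS1) = θ) :
    γ.map f (U.gen h f Ls hC hS)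
      = 𝔹.pushf h f hC (Ls.foldr (fun l α => 𝔹.phi (h ≫ f) l α) θ) := by
  rw [U.gen_push h f Ls hC hS hC1 hS1, γ.map_push, γ.map_gen_id U hLpull_id _ hC1 hS1 hθ]

theorem map_eq_of_eq_on_gen (γ' : OrientedGrothendieckTransformation 𝕄 𝔹) {X Y : V}
    (f : X ⟶ Y)
    (hgen : ∀ {W : V} (h : W ⟶ X) (Ls : List (Lfib W)) (hC : confined h) (hS : S (h ≫ f)),
      γ.map f (U.gen h f Ls hC hS) = γ'.map f (U.gen h f Ls hC hS))
    (α : 𝕄.B f) : γ.map f α = γ'.map f α := by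
  refine AddMonoidHom.eqOn_closure (f := γ.mapHom f) (g := γ'.mapHom f) ?_ (U.span f α)
  rintro _ ⟨W, h, Ls, hC, hS, rfl⟩
  exact hgen h Ls hC hS

end OrientedGrothendieckTransformation

/-- Uniqueness in the universal property of `OM^C_S`: an oriented
Grothendieck transformation `γ : OM^C_S → OB` with `γ([X →^{id} X]) = θ_OB(f)` for `f ∈ S`
necessarily satisfies `γ([V →h X; L₁,…,L_r]) = h_*(φ(L₁) ∘ ⋯ ∘ φ(L_r)(θ_OB(f∘h)))` on all
generators, hence is unique. -/
theorem oriented_universal_uniqueness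
    (𝕄 𝔹 : OrientedBivariantTheory.{w} V confined indep Lfib @Liso @Lpull)
    (U : OrientedUnivGen S 𝕄)
    (θ : NiceCanonicalOrientation S 𝔹.toBivariantTheory)
    (hLpull_id : ∀ {X : V} (l : Lfib X), Lpull (𝟙 X) l = l)
    (γ γ' : OrientedGrothendieckTransformation 𝕄 𝔹)
    (hnorm : ∀ {X Y : V} (f : X ⟶ Y) (hf : S f) (hC : confined (𝟙 X)) (hS : S (𝟙 X ≫ f)),
        γ.map f (U.gen (𝟙 X) f [] hC hS) = θ.θ f hf)
    (hnorm' : ∀ {X Y : V} (f : X ⟶ Y) (hf : S f) (hC : confined (𝟙 X)) (hS : S (𝟙 X ≫ f)),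
        γ'.map f (U.gen (𝟙 X) f [] hC hS) = θ.θ f hf)
    (hCid : ∀ X : V, confined (𝟙 X)) (hSid : ∀ {X Y : V} (f : X ⟶ Y), S f → S (𝟙 X ≫ f)) :
    (∀ {W X Y : V} (h : W ⟶ X) (f : X ⟶ Y) (Ls : List (Lfib W))
        (hC : confined h) (hS : S (h ≫ f)),
        γ.map f (U.gen h f Ls hC hS)
          = 𝔹.pushf h f hC
              (Ls.foldr (fun l α => 𝔹.phi (h ≫ f) l α) (θ.θ (h ≫ f) hS))) ∧
    (∀ {X Y : V} (f : X ⟶ Y) (α : 𝕄.B f), γ.map f α = γ'.map f α) := by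
  refine ⟨fun h f Ls hC hS =>
      γ.map_gen U hLpull_id h f Ls hC hS (hCid _) (hSid _ hS) (hnorm _ hS _ _),
    fun f α => γ.map_eq_of_eq_on_gen U γ' f (fun h Ls hC hS => ?_) α⟩
  rw [γ.map_gen U hLpull_id h f Ls hC hS (hCid _) (hSid _ hS) (hnorm _ hS _ _),
    γ'.map_gen U hLpull_id h f Ls hC hS (hCid _) (hSid _ hS) (hnorm' _ hS _ _)]
end
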